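/- arXiv:0908.0208 — 3 statements merged into one kernel-verified Lean document; each statement's English description precedes it below -/
import Mathlib

section
/- The map from [0, ∞] to the Chabauty space of closed subgroups of ℝ, sending α ∈ (0, ∞) to the subgroup (1/α)ℤ, sending 0 to {0}, and sending ∞ to ℝ, is a homeomorphism. -/
/-- The space of closed subgroups of a topological additive group `G`. -/
def ChabautyAddGrp (G : Type*) [AddGroup G] [TopologicalSpace G] :=
  {H : AddSubgroup G // IsClosed (H : Set G)}

/-- The Chabauty topology on the space of closed subgroups. -/
instance (G : Type*) [AddGroup G] [TopologicalSpace G] : TopologicalSpace (ChabautyAddGrp G) :=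
  TopologicalSpace.generateFrom
    ({S | ∃ K : Set G, IsCompact K ∧ S = {A : ChabautyAddGrp G | (A.1 : Set G) ∩ K = ∅}} ∪
     {S | ∃ U : Set G, IsOpen U ∧ S = {A : ChabautyAddGrp G | ((A.1 : Set G) ∩ U).Nonempty}})

open scoped ENNReal

/-!
`[0, ∞]` is compact and the Chabauty space of a locally compact group is Hausdorff (a point of
`A \ B` has a compact neighbourhood missing `B`), so it suffices that the map is a continuous
bijection; bijectivity is the classification of closed subgroups of `ℝ`. The sets "meets the open
set `U`" pull back to open sets because a point `n / α` of `α⁻¹ℤ` moves continuously with `α`,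
and because the mesh `1 / α` tends to `0` as `α → ∞`. The sets "misses the compact set `K`" pull
back to open sets because the graph `{(α, x) | x ∈ α⁻¹ℤ}` is closed and projection along a compact
factor is a closed map: away from `α = 0` the graph is cut out by `x α ∈ ℤ`, and near `α = 0` the
product `x α` is too small to be a nonzero integer.
-/

open scoped Topology
open Set Filter AddSubgroup

theorem isOpen_setOf_inter_eq_empty_of_isClosed_graph {X G : Type*} [TopologicalSpace X]
    [TopologicalSpace G] {f : X → Set G} (hf : IsClosed {p : X × G | p.2 ∈ f p.1})
    {K : Set G} (hK : IsCompact K) : IsOpen {x | f x ∩ K = ∅} := by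
  have : CompactSpace K := isCompact_iff_compactSpace.mp hK
  have hclosed : IsClosed (Prod.fst '' {p : X × K | (p.2 : G) ∈ f p.1}) :=
    isClosedMap_fst_of_compactSpace _
      (hf.preimage (continuous_fst.prodMk (continuous_subtype_val.comp continuous_snd)))
  convert hclosed.isOpen_compl using 1
  ext x
  simp only [Set.eq_empty_iff_forall_notMem, mem_inter_iff, not_and, mem_ofPred_eq, mem_compl_iff,
    mem_image, Subtype.exists, Prod.exists, exists_and_right, exists_eq_right, not_exists]
  exact ⟨fun h y hy hyf => h y hyf hy, fun h y hyf hy => h y hy hyf⟩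

namespace ChabautyAddGrp

variable {G : Type*} [AddGroup G] [TopologicalSpace G]

theorem isOpen_setOf_inter_eq_empty {K : Set G} (hK : IsCompact K) :
    IsOpen {A : ChabautyAddGrp G | (A.1 : Set G) ∩ K = ∅} :=
  TopologicalSpace.isOpen_generateFrom_of_mem (Or.inl ⟨K, hK, rfl⟩)

theorem isOpen_setOf_inter_nonempty {U : Set G} (hU : IsOpen U) :
    IsOpen {A : ChabautyAddGrp G | ((A.1 : Set G) ∩ U).Nonempty} :=
  TopologicalSpace.isOpen_generateFrom_of_mem (Or.inr ⟨U, hU, rfl⟩)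

theorem exists_isOpen_disjoint_of_mem_of_notMem [LocallyCompactSpace G]
    {A B : ChabautyAddGrp G} {x : G} (hxA : x ∈ A.1) (hxB : x ∉ B.1) :
    ∃ u v, IsOpen u ∧ IsOpen v ∧ A ∈ u ∧ B ∈ v ∧ Disjoint u v := by
  obtain ⟨K, hK, hxK, hKB⟩ := exists_compact_subset B.2.isOpen_compl hxB
  refine ⟨_, _, isOpen_setOf_inter_nonempty isOpen_interior, isOpen_setOf_inter_eq_empty hK,
    ⟨x, hxA, hxK⟩, ?_, ?_⟩
  · exact (disjoint_compl_right.mono_right hKB).inter_eq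
  · refine Set.disjoint_left.mpr fun C ⟨y, hyC, hyK⟩ hCK => ?_
    exact (Set.eq_empty_iff_forall_notMem.mp hCK) y ⟨hyC, interior_subset hyK⟩

instance [LocallyCompactSpace G] : T2Space (ChabautyAddGrp G) := by
  refine ⟨fun A B hAB => ?_⟩
  obtain ⟨x, hx⟩ : ∃ x, ¬(x ∈ A.1 ↔ x ∈ B.1) := by
    by_contra! h
    exact hAB (Subtype.ext (SetLike.ext h))
  by_cases hxA : x ∈ A.1
  · exact exists_isOpen_disjoint_of_mem_of_notMem hxA (by tauto)
  · obtain ⟨u, v, hu, hv, hBu, hAv, huv⟩ :=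
      exists_isOpen_disjoint_of_mem_of_notMem (by tauto : x ∈ B.1) hxA
    exact ⟨v, u, hv, hu, hAv, hBu, huv.symm⟩

theorem continuous_of_isClosed_graph {X : Type*} [TopologicalSpace X] {f : X → ChabautyAddGrp G}
    (hclosed : IsClosed {p : X × G | p.2 ∈ (f p.1).1})
    (hopen : ∀ U : Set G, IsOpen U → IsOpen {x | (((f x).1 : Set G) ∩ U).Nonempty}) :
    Continuous f := by
  refine continuous_generateFrom_iff.mpr ?_
  rintro s (⟨K, hK, rfl⟩ | ⟨U, hU, rfl⟩)
  · exact isOpen_setOf_inter_eq_empty_of_isClosed_graph hclosed hK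
  · exact hopen U hU

end ChabautyAddGrp

theorem mem_zmultiples_one_div_iff {K : Type*} [DivisionRing K] {t x : K} (ht : t ≠ 0) :
    x ∈ zmultiples (1 / t) ↔ ∃ n : ℤ, x * t = n := by
  simp only [mem_zmultiples_iff, zsmul_eq_mul, one_div]
  exact exists_congr fun n => by rw [eq_comm, eq_mul_inv_iff_mul_eq₀ ht]

theorem exists_mem_zmultiples_abs_sub_le {K : Type*} [Field K] [LinearOrder K]
    [IsStrictOrderedRing K] [FloorRing K] {c : K} (hc : 0 < c) (y : K) :
    ∃ z ∈ zmultiples c, |z - y| ≤ c / 2 := by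
  refine ⟨round (y / c) • c, zsmul_mem (mem_zmultiples c) _, ?_⟩
  calc |round (y / c) • c - y| = |y / c - round (y / c)| * c := by
        rw [← abs_of_pos hc, ← abs_mul, abs_of_pos hc, abs_sub_comm, zsmul_eq_mul, sub_mul,
          div_mul_cancel₀ _ hc.ne']
    _ ≤ 1 / 2 * c := by gcongr; exact abs_sub_round _
    _ = c / 2 := by ring

noncomputable def invZMultiples (α : ℝ≥0∞) : AddSubgroup ℝ :=
  if α = 0 then ⊥ else if α = ⊤ then ⊤ else zmultiples (1 / α.toReal)

@[simp]
theorem invZMultiples_zero : invZMultiples 0 = ⊥ := if_pos rfl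

@[simp]
theorem invZMultiples_top : invZMultiples ⊤ = ⊤ := by simp [invZMultiples]

theorem invZMultiples_of_ne {α : ℝ≥0∞} (h0 : α ≠ 0) (ht : α ≠ ⊤) :
    invZMultiples α = zmultiples (1 / α.toReal) := by
  simp [invZMultiples, h0, ht]

theorem mem_invZMultiples_iff {α : ℝ≥0∞} (h0 : α ≠ 0) (ht : α ≠ ⊤) {x : ℝ} :
    x ∈ invZMultiples α ↔ ∃ n : ℤ, x * α.toReal = n := by
  rw [invZMultiples_of_ne h0 ht, mem_zmultiples_one_div_iff (ENNReal.toReal_pos h0 ht).ne']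

theorem isClosed_setOf_mem_invZMultiples :
    IsClosed {p : ℝ≥0∞ × ℝ | p.2 ∈ invZMultiples p.1} := by
  refine isOpen_compl_iff.mp (isOpen_iff_mem_nhds.mpr ?_)
  rintro ⟨α, x⟩ hx
  simp only [mem_compl_iff, mem_ofPred_eq] at hx
  have hαt : α ≠ ⊤ := by rintro rfl; exact hx (by simp)
  have hF : ContinuousAt (fun p : ℝ≥0∞ × ℝ => p.2 * p.1.toReal) (α, x) :=
    continuousAt_snd.mul (ENNReal.continuousAt_toReal hαt).fst'
  have hne_top : ∀ᶠ p : ℝ≥0∞ × ℝ in 𝓝 (α, x), p.1 ≠ ⊤ :=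
    continuousAt_fst.eventually (eventually_ne_nhds hαt)
  rcases eq_or_ne α 0 with rfl | hα0
  · have hx0 : x ≠ 0 := by simpa using hx
    have hsmall : ∀ᶠ p : ℝ≥0∞ × ℝ in 𝓝 (0, x), |p.2 * p.1.toReal| < 1 := by
      refine hF.eventually (isOpen_lt continuous_abs continuous_const |>.mem_nhds ?_)
      simp
    filter_upwards [hsmall, hne_top, continuousAt_snd.eventually (eventually_ne_nhds hx0)]
      with ⟨β, y⟩ hsmall hβt hy0
    rcases eq_or_ne β 0 with rfl | hβ0
    · simpa using hy0
    rw [mem_compl_iff, mem_ofPred_eq, mem_invZMultiples_iff hβ0 hβt]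
    rintro ⟨n, hn⟩
    have hn0 : n = 0 := by
      rw [← Int.abs_lt_one_iff, ← Int.cast_lt (R := ℝ), Int.cast_abs]
      simpa [hn] using hsmall
    simp only [hn0, Int.cast_zero, mul_eq_zero] at hn
    exact hn.elim hy0 (ENNReal.toReal_pos hβ0 hβt).ne'
  · have hxF : x * α.toReal ∉ range ((↑) : ℤ → ℝ) := by
      rw [mem_invZMultiples_iff hα0 hαt] at hx
      exact fun ⟨n, hn⟩ => hx ⟨n, hn.symm⟩
    filter_upwards [hF.eventually (Real.isOpen_compl_range_intCast.mem_nhds hxF), hne_top,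
      continuousAt_fst.eventually (eventually_ne_nhds hα0)] with ⟨β, y⟩ hyF hβt hβ0
    rw [mem_compl_iff, mem_ofPred_eq, mem_invZMultiples_iff hβ0 hβt]
    exact fun ⟨n, hn⟩ => hyF ⟨n, hn.symm⟩

theorem isOpen_setOf_invZMultiples_inter_nonempty {U : Set ℝ} (hU : IsOpen U) :
    IsOpen {α : ℝ≥0∞ | ((invZMultiples α : Set ℝ) ∩ U).Nonempty} := by
  refine isOpen_iff_mem_nhds.mpr fun α ⟨y, hyα, hyU⟩ => ?_
  rcases eq_or_ne α 0 with rfl | hα0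
  · obtain rfl : y = 0 := by simpa using hyα
    exact univ_mem' fun β => ⟨0, zero_mem _, hyU⟩
  rcases eq_or_ne α ⊤ with rfl | hαt
  · obtain ⟨ε, hε, hball⟩ := Metric.isOpen_iff.mp hU y hyU
    filter_upwards [Ioi_mem_nhds (ENNReal.ofReal_lt_top (r := ε⁻¹))] with β hβ
    rcases eq_or_ne β ⊤ with rfl | hβt
    · exact ⟨y, by simp, hyU⟩
    have hβε : ε⁻¹ < β.toReal :=
      (ENNReal.ofReal_lt_iff_lt_toReal (by positivity) hβt).mp hβ
    have hβ0 : β ≠ 0 := (bot_le.trans_lt hβ).ne'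
    have hmesh : 1 / β.toReal < ε := by
      rw [one_div]
      exact inv_lt_of_inv_lt₀ hε hβε
    obtain ⟨z, hz, hzy⟩ := exists_mem_zmultiples_abs_sub_le
      (one_div_pos.mpr (ENNReal.toReal_pos hβ0 hβt)) y
    refine ⟨z, by rwa [invZMultiples_of_ne hβ0 hβt], hball ?_⟩
    rw [Metric.mem_ball, Real.dist_eq]
    linarith
  · rw [invZMultiples_of_ne hα0 hαt] at hyα
    obtain ⟨n, rfl⟩ := mem_zmultiples_iff.mp hyα
    have hcont : ContinuousAt (fun β : ℝ≥0∞ => n • (1 / β.toReal)) α :=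
      (continuousAt_const.div (ENNReal.continuousAt_toReal hαt)
        (ENNReal.toReal_pos hα0 hαt).ne').const_smul n
    filter_upwards [hcont.eventually (hU.mem_nhds hyU), eventually_ne_nhds hα0,
      eventually_ne_nhds hαt] with β hβU hβ0 hβt
    rw [invZMultiples_of_ne hβ0 hβt]
    exact ⟨_, zsmul_mem (mem_zmultiples _) n, hβU⟩

theorem invZMultiples_eq_bot_iff {α : ℝ≥0∞} : invZMultiples α = ⊥ ↔ α = 0 := by
  refine ⟨fun h => ?_, by rintro rfl; simp⟩
  by_contra h0
  rcases eq_or_ne α ⊤ with rfl | ht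
  · simp at h
  · rw [invZMultiples_of_ne h0 ht, zmultiples_eq_bot] at h
    exact (one_div_pos.mpr (ENNReal.toReal_pos h0 ht)).ne' h

theorem invZMultiples_eq_top_iff {α : ℝ≥0∞} : invZMultiples α = ⊤ ↔ α = ⊤ := by
  refine ⟨fun h => ?_, by rintro rfl; simp⟩
  by_contra ht
  rcases eq_or_ne α 0 with rfl | h0
  · simp at h
  · rw [invZMultiples_of_ne h0 ht] at h
    exact dense_iff_ne_zmultiples.mp (by simp) _ h.symm

theorem invZMultiples_injective : Function.Injective invZMultiples := by
  intro α β h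
  rcases eq_or_ne α 0 with rfl | hα0
  · exact (invZMultiples_eq_bot_iff.mp (h ▸ invZMultiples_zero)).symm
  rcases eq_or_ne α ⊤ with rfl | hαt
  · exact (invZMultiples_eq_top_iff.mp (h ▸ invZMultiples_top)).symm
  have hβ0 : β ≠ 0 := fun hβ =>
    hα0 (invZMultiples_eq_bot_iff.mp (by rw [h, hβ, invZMultiples_zero]))
  have hβt : β ≠ ⊤ := fun hβ =>
    hαt (invZMultiples_eq_top_iff.mp (by rw [h, hβ, invZMultiples_top]))
  have hα := one_div_pos.mpr (ENNReal.toReal_pos hα0 hαt)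
  have hβ := one_div_pos.mpr (ENNReal.toReal_pos hβ0 hβt)
  rw [invZMultiples_of_ne hα0 hαt, invZMultiples_of_ne hβ0 hβt,
    zmultiples_eq_zmultiples_iff (not_isOfFinAddOrder_of_isAddTorsionFree hα.ne')] at h
  rcases h with h | h
  · rwa [one_div, one_div, inv_inj, ENNReal.toReal_eq_toReal_iff' hαt hβt] at h
  · linarith

theorem exists_invZMultiples_eq {A : AddSubgroup ℝ} (hA : IsClosed (A : Set ℝ)) :
    ∃ α, invZMultiples α = A := by
  rcases A.dense_or_cyclic with hd | ⟨a, rfl⟩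
  · refine ⟨⊤, ?_⟩
    rw [invZMultiples_top, eq_comm, ← coe_eq_univ, ← hA.closure_eq, hd.closure_eq]
  rw [← zmultiples_eq_closure]
  rcases eq_or_ne a 0 with rfl | ha
  · exact ⟨0, by simp⟩
  refine ⟨ENNReal.ofReal |a|⁻¹, ?_⟩
  rw [invZMultiples_of_ne (by simpa using ha) ENNReal.ofReal_ne_top,
    ENNReal.toReal_ofReal (by positivity), one_div, inv_inv]
  rcases abs_choice a with h | h <;> rw [h]
  exact zmultiples_neg

/-- The map from `[0, ∞]` to the Chabauty space of closed subgroups of `ℝ`, sending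
`α ∈ (0, ∞)` to `(1/α)ℤ`, sending `0` to `{0}` and `∞` to `ℝ`, is a homeomorphism. -/
theorem chabauty_real_homeomorph (φ : ℝ≥0∞ → ChabautyAddGrp ℝ)
    (hφ0 : (φ 0).1 = ⊥)
    (hφtop : (φ ⊤).1 = ⊤)
    (hφ : ∀ α : ℝ≥0∞, α ≠ 0 → α ≠ ⊤ →
      (φ α).1 = AddSubgroup.zmultiples (1 / α.toReal)) :
    IsHomeomorph φ := by
  have hφ' : ∀ α, (φ α).1 = invZMultiples α := by
    intro α
    rcases eq_or_ne α 0 with rfl | h0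
    · rw [hφ0, invZMultiples_zero]
    rcases eq_or_ne α ⊤ with rfl | ht
    · rw [hφtop, invZMultiples_top]
    · rw [hφ α h0 ht, invZMultiples_of_ne h0 ht]
  rw [isHomeomorph_iff_continuous_bijective]
  refine ⟨?_, fun α β h => invZMultiples_injective ?_, fun A => ?_⟩
  · apply ChabautyAddGrp.continuous_of_isClosed_graph
    · simpa only [hφ'] using isClosed_setOf_mem_invZMultiples
    · simpa only [hφ'] using fun U hU => isOpen_setOf_invZMultiples_inter_nonempty hU
  · rw [← hφ', ← hφ', h]
  · obtain ⟨α, hα⟩ := exists_invZMultiples_eq A.2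
    exact ⟨α, Subtype.ext ((hφ' α).trans hα)⟩
end

section
/- The set of closed subgroups of a closed subgroup G of GL(V) whose action on V is distal is a closed subset of the Chabauty space S(G). -/
open Matrix

/-- The space of closed subgroups of a topological group `G`. -/
def ChabautyGrp (G : Type*) [Group G] [TopologicalSpace G] :=
  {H : Subgroup G // IsClosed (H : Set G)}

/-- The Chabauty topology on the space of closed subgroups. -/
instance (G : Type*) [Group G] [TopologicalSpace G] : TopologicalSpace (ChabautyGrp G) :=
  TopologicalSpace.generateFrom
    ({S | ∃ K : Set G, IsCompact K ∧ S = {A : ChabautyGrp G | (A.1 : Set G) ∩ K = ∅}} ∪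
     {S | ∃ U : Set G, IsOpen U ∧ S = {A : ChabautyGrp G | ((A.1 : Set G) ∩ U).Nonempty}})

/-- An element of `GL(V)` is distal if all its complex eigenvalues have modulus 1. -/
def IsDistalElt {n : ℕ} (g : GL (Fin n) ℝ) : Prop :=
  ∀ μ ∈ spectrum ℂ ((g : Matrix (Fin n) (Fin n) ℝ).map (Complex.ofReal)), ‖μ‖ = 1

/-! Being non-distal is an open condition on `g ∈ GL(V)`: if `g` has an eigenvalue `μ` with
`‖μ‖ ≠ 1`, then for `g'` near `g` the characteristic polynomial of `g'` is small at `μ`, and since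
it is the product of the `μ - ν` over its roots `ν`, some eigenvalue `ν` of `g'` is close to `μ`,
so again `‖ν‖ ≠ 1`. A closed subgroup fails to be distal exactly when it meets this open set, and
meeting a fixed open set is an open condition in the Chabauty topology. -/

namespace Polynomial

theorem exists_mem_roots_norm_sub_lt_of_norm_eval_lt {K : Type*} [NormedField K] {q : K[X]}
    (hq : q.Monic) (hsplit : q.Splits) {a : K} {ε : ℝ} (hε : 0 ≤ ε)
    (h : ‖q.eval a‖ < ε ^ q.natDegree) : ∃ b ∈ q.roots, ‖a - b‖ < ε := by
  by_contra! hfar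
  have hprod : ‖q.eval a‖ = (q.roots.map fun b => ‖a - b‖).prod := by
    rw [hsplit.eval_eq_prod_roots_of_monic hq]
    exact (q.roots.prod_hom' (normHom : K →*₀ ℝ) _).symm
  have hle := Multiset.prod_map_le_prod_map₀ (fun _ => ε) (fun b => ‖a - b‖)
    (fun _ _ => hε) hfar
  rw [Multiset.map_const', Multiset.prod_replicate, ← hsplit.natDegree_eq_card_roots,
    ← hprod] at hle
  exact hle.not_gt h

end Polynomial

namespace Matrix

variable {ι : Type*} [Fintype ι] [DecidableEq ι]

theorem continuous_eval_charpoly {R : Type*} [CommRing R] [TopologicalSpace R]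
    [IsTopologicalRing R] (t : R) : Continuous fun M : Matrix ι ι R => M.charpoly.eval t := by
  simp only [eval_charpoly]
  fun_prop

theorem isOpen_setOf_spectrum_inter_nonempty {K : Type*} [NormedField K] [IsAlgClosed K]
    {U : Set K} (hU : IsOpen U) : IsOpen {M : Matrix ι ι K | (spectrum K M ∩ U).Nonempty} := by
  refine isOpen_iff_mem_nhds.2 fun M ⟨μ, hμM, hμU⟩ => ?_
  obtain ⟨ε, hε, hball⟩ := Metric.isOpen_iff.1 hU μ hμU
  have hM : ‖M.charpoly.eval μ‖ < ε ^ Fintype.card ι := by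
    rw [(mem_spectrum_iff_isRoot_charpoly.1 hμM).eq_zero, norm_zero]
    positivity
  filter_upwards [(continuous_eval_charpoly μ).norm.continuousAt.eventually_lt
    continuousAt_const hM] with M' hM'
  rw [← M'.charpoly_natDegree_eq_dim] at hM'
  obtain ⟨ν, hν, hμν⟩ := Polynomial.exists_mem_roots_norm_sub_lt_of_norm_eval_lt
    M'.charpoly_monic (IsAlgClosed.splits _) hε.le hM'
  refine ⟨ν, mem_spectrum_iff_isRoot_charpoly.2 (Polynomial.isRoot_of_mem_roots hν), hball ?_⟩
  rwa [Metric.mem_ball, dist_comm, dist_eq_norm]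

end Matrix

theorem isClosed_setOf_isDistalElt {n : ℕ} : IsClosed {g : GL (Fin n) ℝ | IsDistalElt g} := by
  have hnondistal : {g : GL (Fin n) ℝ | IsDistalElt g}ᶜ = (fun g : GL (Fin n) ℝ =>
      (g : Matrix (Fin n) (Fin n) ℝ).map Complex.ofReal) ⁻¹'
        {M | (spectrum ℂ M ∩ {μ | ‖μ‖ ≠ 1}).Nonempty} := by
    ext g
    simp [IsDistalElt, Set.Nonempty]
  rw [← isOpen_compl_iff, hnondistal]
  exact (Matrix.isOpen_setOf_spectrum_inter_nonempty
    (isOpen_ne_fun continuous_norm continuous_const)).preimage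
    (Units.continuous_val.matrix_map Complex.continuous_ofReal)

namespace ChabautyGrp

variable {G : Type*} [Group G] [TopologicalSpace G]

theorem isOpen_setOf_inter_nonempty {U : Set G} (hU : IsOpen U) :
    IsOpen {A : ChabautyGrp G | ((A.1 : Set G) ∩ U).Nonempty} :=
  TopologicalSpace.isOpen_generateFrom_of_mem (Or.inr ⟨U, hU, rfl⟩)

theorem isClosed_setOf_subset {F : Set G} (hF : IsClosed F) :
    IsClosed {A : ChabautyGrp G | (A.1 : Set G) ⊆ F} := by
  have hcompl : {A : ChabautyGrp G | (A.1 : Set G) ⊆ F}ᶜ = {A | ((A.1 : Set G) ∩ Fᶜ).Nonempty} := by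
    ext A
    simp [Set.not_subset, Set.Nonempty]
  rw [← isOpen_compl_iff, hcompl]
  exact isOpen_setOf_inter_nonempty hF.isOpen_compl

end ChabautyGrp

theorem distal_subgroups_isClosed_general {n : ℕ} (G : Subgroup (GL (Fin n) ℝ)) :
    IsClosed {A : ChabautyGrp ↥G | ∀ h ∈ A.1, IsDistalElt (h : GL (Fin n) ℝ)} :=
  ChabautyGrp.isClosed_setOf_subset (isClosed_setOf_isDistalElt.preimage continuous_subtype_val)

/-- The set of closed subgroups of a closed subgroup `G` of `GL(V)` whose action on `V` is
distal is a closed subset of the Chabauty space `S(G)`. -/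
theorem distal_subgroups_isClosed {n : ℕ} (G : Subgroup (GL (Fin n) ℝ))
    (hG : IsClosed (G : Set (GL (Fin n) ℝ))) :
    IsClosed {A : ChabautyGrp ↥G | ∀ h ∈ A.1, IsDistalElt (h : GL (Fin n) ℝ)} :=
  distal_subgroups_isClosed_general G
end

section
/- Let d = m' ⊕ n be a Lie algebra where m' acts on itself by skew-symmetric operators with respect to a positive-definite form on the ambient semisimple Lie algebra g, containing d as a subalgebra, with m' ⊆ k (the compact part of a Cartan decomposition) and n = n_I the nilpotent part satisfying [m', n] ⊆ n. Then the set of X ∈ d for which ad_g X is a nilpotent endomorphism of g is exactly n. -/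
/-!
Write `X = U + Y` with `U ∈ m'` and `Y ∈ n`. Since `ad X` and `ad Y` are nilpotent,
`κ(X, X) = κ(Y, Y) = 0`. As `ad U` is skew for `B_θ`, its restriction to `n` satisfies
`n = ker (ad U) ⊕ range (ad U)`, and `κ(U, ·)` vanishes on both summands: on the kernel because
`ad U` commutes with a nilpotent operator there, on the range by invariance of `κ`. Hence
`κ(U, U) = κ(X, X) - 2 κ(U, Y) - κ(Y, Y) = 0`, i.e. `B_θ(U, U) = 0`, so `U = 0`.
-/

open LieAlgebra LieModule

theorem LinearMap.isCompl_ker_range_of_disjoint {K V : Type*} [Field K] [AddCommGroup V]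
    [Module K V] [FiniteDimensional K V] {f : V →ₗ[K] V}
    (h : Disjoint (LinearMap.ker f) (LinearMap.range f)) :
    IsCompl (LinearMap.ker f) (LinearMap.range f) :=
  (Submodule.isCompl_iff_disjoint _ _
    (by rw [add_comm, LinearMap.finrank_range_add_finrank_ker])).mpr h

theorem killingForm_eq_zero_of_lie_eq_zero_of_isNilpotent {K L : Type*} [Field K] [LieRing L]
    [LieAlgebra K L] {x y : L} (hxy : ⁅x, y⁆ = 0) (hy : IsNilpotent (ad K L y)) :
    killingForm K L x y = 0 := by
  have hcomm : Commute (ad K L x) (ad K L y) :=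
    LinearMap.ext fun z ↦ by simp [leibniz_lie x y z, hxy]
  rw [killingForm_apply_apply, ← Module.End.mul_eq_comp]
  exact (LinearMap.isNilpotent_trace_of_isNilpotent (hcomm.isNilpotent_mul_left hy)).eq_zero

theorem killingForm_self_eq_zero_of_isNilpotent {K L : Type*} [Field K] [LieRing L]
    [LieAlgebra K L] {x : L} (hx : IsNilpotent (ad K L x)) : killingForm K L x x = 0 :=
  killingForm_eq_zero_of_lie_eq_zero_of_isNilpotent (lie_self x) hx

section AnisotropicKillingForm

variable {K L : Type*} [Field K] [LieRing L] [LieAlgebra K L] (θ : L →ₗ⁅K⁆ L)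
  (hθ : ∀ Y : L, killingForm K L Y (θ Y) = 0 → Y = 0)
include hθ

theorem eq_zero_of_mem_ker_ad_of_eq_lie {U v w : L} (hU : θ U = U) (hv : ⁅U, v⁆ = 0)
    (hvw : v = ⁅U, w⁆) : v = 0 := by
  refine hθ v ?_
  have hθv : ⁅U, θ v⁆ = 0 := by rw [← hU, ← LieHom.map_lie, hv, map_zero]
  calc killingForm K L v (θ v) = killingForm K L ⁅U, w⁆ (θ v) := by rw [← hvw]
    _ = -killingForm K L w ⁅U, θ v⁆ := traceForm_apply_lie_apply' K L L U w (θ v)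
    _ = 0 := by rw [hθv, map_zero, neg_zero]

theorem killingForm_eq_zero_of_mem_of_forall_isNilpotent [FiniteDimensional K L] {U : L}
    (hU : θ U = U) (n : Submodule K L) (hUn : ∀ Y ∈ n, ⁅U, Y⁆ ∈ n)
    (hnil : ∀ Y ∈ n, IsNilpotent (ad K L Y)) {Y : L} (hY : Y ∈ n) :
    killingForm K L U Y = 0 := by
  set f : n →ₗ[K] n := (ad K L U).restrict hUn
  have hf : ∀ v : n, (f v : L) = ⁅U, (v : L)⁆ := fun _ ↦ rfl
  have hdisj : Disjoint (LinearMap.ker f) (LinearMap.range f) := by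
    rw [Submodule.disjoint_def]
    rintro v hv ⟨w, rfl⟩
    refine Subtype.ext (eq_zero_of_mem_ker_ad_of_eq_lie θ hθ hU ?_ (hf w))
    rw [← hf, LinearMap.mem_ker.mp hv, ZeroMemClass.coe_zero]
  obtain ⟨z, hz, _, ⟨w, rfl⟩, hYzw⟩ :=
    Submodule.mem_sup.mp ((LinearMap.isCompl_ker_range_of_disjoint hdisj).sup_eq_top ▸
      Submodule.mem_top (x := (⟨Y, hY⟩ : n)))
  have hz : ⁅U, (z : L)⁆ = 0 := by rw [← hf, LinearMap.mem_ker.mp hz, ZeroMemClass.coe_zero]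
  have hY : Y = z + ⁅U, (w : L)⁆ := by rw [← hf, ← Submodule.coe_add, hYzw]
  rw [hY, map_add, killingForm_eq_zero_of_lie_eq_zero_of_isNilpotent hz (hnil z z.2),
    ← traceForm_apply_lie_apply, lie_self, map_zero, LinearMap.zero_apply, add_zero]

end AnisotropicKillingForm

theorem ad_nilpotent_elements_eq_n_general
    {L : Type*} [LieRing L] [LieAlgebra ℝ L] [Module.Finite ℝ L]
    (θ : L →ₗ⁅ℝ⁆ L)
    (hpos : ∀ Y : L, Y ≠ 0 → 0 < -(killingForm ℝ L Y (θ Y)))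
    (m' n : Submodule ℝ L)
    (hm'k : ∀ U ∈ m', θ U = U)
    (hnnil : ∀ Y ∈ n, IsNilpotent (LieAlgebra.ad ℝ L Y))
    (hbracket : ∀ U ∈ m', ∀ Y ∈ n, ⁅U, Y⁆ ∈ n) :
    ∀ X ∈ m' ⊔ n, (IsNilpotent (LieAlgebra.ad ℝ L X) ↔ X ∈ n) := by
  intro X hX
  refine ⟨fun hXnil ↦ ?_, hnnil X⟩
  obtain ⟨U, hU, Y, hY, rfl⟩ := Submodule.mem_sup.mp hX
  have hθ : ∀ Z : L, killingForm ℝ L Z (θ Z) = 0 → Z = 0 := fun Z hZ ↦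
    by_contra fun hZ0 ↦ by simpa [hZ] using hpos Z hZ0
  have hUY : killingForm ℝ L U Y = 0 :=
    killingForm_eq_zero_of_mem_of_forall_isNilpotent θ hθ (hm'k U hU) n (hbracket U hU)
      hnnil hY
  have hUU : killingForm ℝ L U U = 0 := by
    have hXX := killingForm_self_eq_zero_of_isNilpotent hXnil
    have hYY := killingForm_self_eq_zero_of_isNilpotent (hnnil Y hY)
    simp only [map_add, LinearMap.add_apply] at hXX
    rw [traceForm_comm ℝ L L Y U] at hXX
    linear_combination hXX - 2 * hUY - hYY
  have hU0 : U = 0 := hθ U (by rw [hm'k U hU, hUU])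
  rwa [hU0, zero_add]

/-- Let `g` be a real semisimple Lie algebra with Cartan involution `θ` (with
`B_θ(Y,Z) = -B(Y,θZ)` positive definite), and let `d = m' ⊕ n` be a subalgebra where
`m' ⊆ k` (the fixed points of `θ`), every element of `n` is `ad`-nilpotent, and
`[m', n] ⊆ n`. Then the set of `X ∈ d` for which `ad_g X` is a nilpotent endomorphism of `g`
is exactly `n`. -/
theorem ad_nilpotent_elements_eq_n
    {L : Type*} [LieRing L] [LieAlgebra ℝ L] [Module.Finite ℝ L]
    [LieAlgebra.IsSemisimple ℝ L]
    (θ : L →ₗ⁅ℝ⁆ L) (hθinv : ∀ x, θ (θ x) = x)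
    (hpos : ∀ Y : L, Y ≠ 0 → 0 < -(killingForm ℝ L Y (θ Y)))
    (m' n : Submodule ℝ L)
    (hm'k : ∀ U ∈ m', θ U = U)
    (hnnil : ∀ Y ∈ n, IsNilpotent (LieAlgebra.ad ℝ L Y))
    (hbracket : ∀ U ∈ m', ∀ Y ∈ n, ⁅U, Y⁆ ∈ n)
    (hdisj : m' ⊓ n = ⊥) :
    ∀ X ∈ m' ⊔ n, (IsNilpotent (LieAlgebra.ad ℝ L X) ↔ X ∈ n) :=
  ad_nilpotent_elements_eq_n_general θ hpos m' n hm'k hnnil hbracket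
end
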